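/- Let G = KAN be an Iwasawa decomposition of a semisimple Lie group, Σ⁺ the positive restricted roots, Σ₁ the roots generated by a subset Λ₁ of the simple roots, and let ω be an element of the Weyl group satisfying ω(Σ⁺∩Σ₁) = −(Σ⁺∩Σ₁) and ω(Σ⁺∖Σ₁) = Σ⁺∖Σ₁ and fixing 𝔞₁ pointwise. If λ ∈ 𝔞*_ℂ satisfies Re⟨λ, α⟩ > 0 for all α ∈ Σ⁺∖Σ₁ and λ vanishes appropriately on Σ₁, then Re⟨ωλ, α⟩ > 0 for all α ∈ Σ⁺. -/
import Mathlib


open RealInnerProductSpace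

/-- Root-system combinatorics of [Schlichtkrull, Lemma 6.1.4] used in
Proposition 4.1: if `ω` is an orthogonal transformation of `𝔞*` with
`ω(Σ⁺∩Σ₁) = −(Σ⁺∩Σ₁)` and `ω(Σ⁺∖Σ₁) = Σ⁺∖Σ₁`, and the (real part of) `λ`
satisfies `Re⟨λ, α⟩ > 0` for `α ∈ Σ⁺∖Σ₁` and the appropriate sign condition
`Re⟨λ, α⟩ < 0` on `Σ⁺∩Σ₁` (coming from the vanishing of `sρ₀−ρ₁` there),
then `Re⟨ωλ, α⟩ > 0` for all `α ∈ Σ⁺`. -/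
theorem stmt17
    {V : Type*} [NormedAddCommGroup V] [InnerProductSpace ℝ V]
    (Splus S1 : Set V)
    (ω : V ≃ₗᵢ[ℝ] V)
    (hω1 : (⇑ω) '' (Splus ∩ S1) = (fun x => -x) '' (Splus ∩ S1))
    (hω2 : (⇑ω) '' (Splus \ S1) = Splus \ S1)
    (lam : V)
    (hpos : ∀ α ∈ Splus \ S1, 0 < ⟪lam, α⟫)
    (hvanish : ∀ α ∈ Splus ∩ S1, ⟪lam, α⟫ < 0) :
    ∀ α ∈ Splus, 0 < ⟪ω lam, α⟫ := by
  intro α hα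
  by_cases h1 : α ∈ S1
  · -- α ∈ Σ⁺ ∩ Σ₁ : then -α is in ω '' (Σ⁺∩Σ₁)
    have hmem : -α ∈ (fun x => -x) '' (Splus ∩ S1) := ⟨α, ⟨hα, h1⟩, rfl⟩
    rw [← hω1] at hmem
    obtain ⟨β, hβ, hβeq⟩ := hmem
    have : ⟪ω lam, α⟫ = -⟪lam, β⟫ := by
      have := ω.inner_map_map lam β
      have h2 : ⟪ω lam, -α⟫ = ⟪lam, β⟫ := by rw [← hβeq]; exact this
      rw [inner_neg_right] at h2; linarith
    rw [this]
    linarith [hvanish β hβ]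
  · have hmem : α ∈ (⇑ω) '' (Splus \ S1) := by rw [hω2]; exact ⟨hα, h1⟩
    obtain ⟨β, hβ, hβeq⟩ := hmem
    have : ⟪ω lam, α⟫ = ⟪lam, β⟫ := by
      rw [← hβeq]; exact ω.inner_map_map lam β
    rw [this]
    exact hpos β hβ
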